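/- Let B be a finite block tree with height function h and confirmation depth d_c, and let δ > 0 be real. If a block b ∈ B is δ-stable with respect to d_c, then every chain from the genesis block b_g to a tip realizing the maximum total length d_c(b_g) passes through b. In other words, a confirmation-based δ-stable block lies on every longest chain of the tree. -/

import Mathlib

/-- A finite block tree: a finite set of blocks with a distinguished genesis
block `g` and a parent map `p` (extended to be total by setting `p g = g`)
such that iterating `p` from any block eventually reaches `g`. -/
structure BlockTree (B : Type*) [Fintype B] [DecidableEq B] where
  g : B
  p : B → B
  root : p g = g
  reach : ∀ b : B, ∃ k : ℕ, p^[k] b = g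

namespace BlockTree

variable {B : Type*} [Fintype B] [DecidableEq B] (T : BlockTree B)

/-- The successors of a block `b`: the blocks (other than genesis) whose parent is `b`. -/
def succ (b : B) : Finset B := Finset.univ.filter fun b' => b' ≠ T.g ∧ T.p b' = b

/-- A block is a tip if it has no successors. -/
def IsTip (b : B) : Prop := T.succ b = ∅

/-- `h` is the height function: the number of iterations of the parent map
needed to reach the genesis block. -/
def IsHeight (h : B → ℕ) : Prop :=
  h T.g = 0 ∧ ∀ b : B, b ≠ T.g → h b = h (T.p b) + 1

/-- `d` is the depth function associated with the cost function `c`: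
`d b = c b` if `b` is a tip, and `d b = c b + max_{b' ∈ succ b} d b'` otherwise. -/
def IsDepth (c : B → ℝ) (d : B → ℝ) : Prop :=
  ∀ b : B, (T.succ b = ∅ → d b = c b) ∧
    ∀ hne : (T.succ b).Nonempty, d b = c b + (T.succ b).sup' hne d

/-- `b''` is a descendant of `b` if iterating the parent map from `b''` reaches
`b` in zero or more steps. -/
def Descendant (b'' b : B) : Prop := ∃ k : ℕ, (T.p)^[k] b'' = b

/-- A block `b` is `δ`-stable with respect to the depth function `d` and the
height function `h` if `d b ≥ δ` and `d b - d b' ≥ δ` for every block `b' ≠ b`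
at the same height. -/
def Stable (_T : BlockTree B) (d : B → ℝ) (h : B → ℕ) (δ : ℝ) (b : B) : Prop :=
  d b ≥ δ ∧ ∀ b' : B, b' ≠ b → h b' = h b → d b - d b' ≥ δ

end BlockTree


namespace BlockTree

variable {B : Type*} [Fintype B] [DecidableEq B] {T : BlockTree B}

theorem mem_succ_iff {b b' : B} : b' ∈ T.succ b ↔ b' ≠ T.g ∧ T.p b' = b := by
  simp [succ]

theorem mem_succ_parent {b : B} (hb : b ≠ T.g) : b ∈ T.succ (T.p b) :=
  mem_succ_iff.2 ⟨hb, rfl⟩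

theorem IsHeight.eq_genesis_of_eq_zero {h : B → ℕ} (hh : T.IsHeight h) {b : B}
    (hb : h b = 0) : b = T.g := by
  by_contra hne
  have := hh.2 b hne
  omega

theorem IsHeight.eq_add_one_of_mem_succ {h : B → ℕ} (hh : T.IsHeight h) {b b' : B}
    (hb' : b' ∈ T.succ b) : h b' = h b + 1 := by
  obtain ⟨hne, rfl⟩ := mem_succ_iff.1 hb'
  exact hh.2 b' hne

theorem IsHeight.eq_index_of_chain {h : B → ℕ} (hh : T.IsHeight h) {k : ℕ} {x : ℕ → B}
    (hx0 : x 0 = T.g) (hsucc : ∀ i < k, x (i + 1) ∈ T.succ (x i)) :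
    ∀ i ≤ k, h (x i) = i := by
  intro i hi
  induction i with
  | zero => rw [hx0, hh.1]
  | succ i ih => rw [hh.eq_add_one_of_mem_succ (hsucc i hi), ih (by omega)]

theorem IsDepth.add_le_of_mem_succ {c d : B → ℝ} (hd : T.IsDepth c d) {b b' : B}
    (hb' : b' ∈ T.succ b) : c b + d b' ≤ d b := by
  rw [(hd b).2 ⟨b', hb'⟩]
  gcongr
  exact Finset.le_sup' d hb'

theorem IsDepth.add_height_le_genesis {d : B → ℝ} {h : B → ℕ}
    (hd : T.IsDepth (fun _ => 1) d) (hh : T.IsHeight h) (b : B) : d b + h b ≤ d T.g := by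
  induction hn : h b generalizing b with
  | zero => simp [hh.eq_genesis_of_eq_zero hn]
  | succ n ih =>
    have hne : b ≠ T.g := by
      rintro rfl
      simp [hh.1] at hn
    have hstep := hd.add_le_of_mem_succ (mem_succ_parent hne)
    have hparent := ih (T.p b) (by rw [hh.2 b hne] at hn; omega)
    push_cast
    linarith

theorem IsDepth.le_add_index_of_chain_to_tip {d : B → ℝ} (hd : T.IsDepth (fun _ => 1) d)
    {k : ℕ} {x : ℕ → B} (hsucc : ∀ i < k, x (i + 1) ∈ T.succ (x i))
    (htip : T.IsTip (x k)) : ∀ i ≤ k, (k : ℝ) + 1 ≤ d (x i) + i := by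
  intro i hi
  induction hi using Nat.decreasingInduction with
  | self => simp [(hd (x k)).1 htip, add_comm]
  | of_succ i hik ih =>
    have hstep := hd.add_le_of_mem_succ (hsucc i hik)
    push_cast at ih
    linarith

end BlockTree

/-- If a block `b` is `δ`-stable (`δ > 0`) with respect to the
confirmation depth `d_c`, then every chain from the genesis block to a tip
whose total length realizes the maximum `d_c (T.g)` passes through `b`. -/
theorem stable_on_every_longest_chain
    {B : Type*} [Fintype B] [DecidableEq B] (T : BlockTree B)
    (dc : B → ℝ) (h : B → ℕ)
    (hh : T.IsHeight h) (hd : T.IsDepth (fun _ => 1) dc)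
    (δ : ℝ) (hδ : 0 < δ) (b : B) (hb : T.Stable dc h δ b)
    (k : ℕ) (x : ℕ → B) (hx0 : x 0 = T.g)
    (hsucc : ∀ i < k, x (i + 1) ∈ T.succ (x i)) (htip : T.IsTip (x k))
    (hlen : ((k : ℝ) + 1) = dc T.g) :
    ∃ i ≤ k, x i = b := by
  have hb_bound := hd.add_height_le_genesis hh b
  have hchain := hd.le_add_index_of_chain_to_tip hsucc htip
  have hbk : h b ≤ k := by
    have : (h b : ℝ) < k + 1 := by linarith [hb.1]
    exact Nat.lt_succ_iff.mp (by exact_mod_cast this)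
  refine ⟨h b, hbk, ?_⟩
  by_contra hne
  have hgap := hb.2 (x (h b)) hne (hh.eq_index_of_chain hx0 hsucc _ hbk)
  have hx_depth := hchain (h b) hbk
  linarith
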